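/- arXiv:2503.18092 — 6 statements merged into one kernel-verified Lean document; each statement's English description precedes it below -/
import Mathlib

section
/- Let X be a compact metrizable space and T : X → 2^X with closed graph. Then the projection of the orbit space satisfies π_0(X_T) = ⋂_{n ∈ ℤ} T^n(X), where π_0((x_i)_{i∈ℤ}) = x_0. In particular X_T ≠ ∅ if and only if ⋂_{n∈ℤ} T^n(X) ≠ ∅. -/
/-- Forward image of a set under a set-valued map. -/
def svImage {X : Type*} (T : X → Set X) (A : Set X) : Set X := {y | ∃ x ∈ A, y ∈ T x}

/-- Preimage of a set under a set-valued map. -/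
def svPreimage {X : Type*} (T : X → Set X) (A : Set X) : Set X := {z | ∃ a ∈ A, a ∈ T z}

/-- The `n`-th image `T^n(A)` for `n : ℤ`. -/
def svIter {X : Type*} (T : X → Set X) (n : ℤ) (A : Set X) : Set X :=
  if 0 ≤ n then (svImage T)^[n.toNat] A else (svPreimage T)^[(-n).toNat] A

lemma mem_fwd_iter {X : Type*} (T : X → Set X) (k : ℕ) (x : X) :
    x ∈ (svImage T)^[k] Set.univ ↔
      ∃ c : ℕ → X, c k = x ∧ ∀ i < k, c (i + 1) ∈ T (c i) := by
  induction k generalizing x with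
  | zero =>
    simp only [Function.iterate_zero, id_eq, Set.mem_univ, true_iff]
    exact ⟨fun _ => x, rfl, fun i hi => absurd hi (by omega)⟩
  | succ k ih =>
    rw [Function.iterate_succ_apply']
    constructor
    · rintro ⟨z, hz, hxz⟩
      obtain ⟨c, hck, hchain⟩ := (ih _).mp hz
      refine ⟨fun j => if j ≤ k then c j else x, by simp, ?_⟩
      intro i hi
      rcases Nat.lt_succ_iff_lt_or_eq.mp hi with h | h
      · simp only [if_pos (Nat.succ_le_of_lt h), if_pos (Nat.le_of_lt h)]
        exact hchain i h
      · simp only [if_pos (le_of_eq h), if_neg (show ¬ i + 1 ≤ k by omega)]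
        rw [h, hck]; exact hxz
    · rintro ⟨c, hck, hchain⟩
      exact ⟨c k, (ih _).mpr ⟨c, rfl, fun i hi => hchain i (by omega)⟩,
        by rw [← hck]; exact hchain k (Nat.lt_succ_self k)⟩

lemma mem_pre_iter {X : Type*} (T : X → Set X) (k : ℕ) (x : X) :
    x ∈ (svPreimage T)^[k] Set.univ ↔
      ∃ c : ℕ → X, c 0 = x ∧ ∀ i < k, c (i + 1) ∈ T (c i) := by
  induction k generalizing x with
  | zero =>
    simp only [Function.iterate_zero, id_eq, Set.mem_univ, true_iff]
    exact ⟨fun _ => x, rfl, fun i hi => absurd hi (by omega)⟩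
  | succ k ih =>
    rw [Function.iterate_succ_apply']
    constructor
    · rintro ⟨a, ha, haT⟩
      obtain ⟨c, hc0, hchain⟩ := (ih _).mp ha
      refine ⟨fun j => match j with | 0 => x | j + 1 => c j, rfl, ?_⟩
      intro i hi
      match i with
      | 0 => show c 0 ∈ T x; rw [hc0]; exact haT
      | j + 1 => exact hchain j (by omega)
    · rintro ⟨c, hc0, hchain⟩
      refine ⟨c 1, (ih _).mpr ⟨fun j => c (j + 1), rfl, fun i hi => hchain (i + 1) (by omega)⟩, ?_⟩
      rw [← hc0]; exact hchain 0 (by omega)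

/-- Finite-window orbit segments through `x` at time 0. -/
def orbSet {X : Type*} (T : X → Set X) (x : X) (N : ℕ) : Set (ℤ → X) :=
  {y | y 0 = x ∧ ∀ i : ℤ, -(N : ℤ) ≤ i → i < (N : ℤ) → y (i + 1) ∈ T (y i)}

lemma orbSet_closed {X : Type*} [TopologicalSpace X] [T2Space X] (T : X → Set X)
    (hT : IsClosed {p : X × X | p.2 ∈ T p.1}) (x : X) (N : ℕ) :
    IsClosed (orbSet T x N) := by
  have h1 : IsClosed {y : ℤ → X | y 0 = x} := isClosed_eq (continuous_apply 0) continuous_const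
  have h2 : ∀ i : ℤ, IsClosed {y : ℤ → X | y (i + 1) ∈ T (y i)} := by
    intro i
    have := IsClosed.preimage (f := fun y : ℤ → X => (y i, y (i + 1)))
      ((continuous_apply i).prodMk (continuous_apply (i + 1))) hT
    exact this
  have heq : orbSet T x N = {y : ℤ → X | y 0 = x} ∩
      ⋂ i : ℤ, ⋂ (_ : -(N : ℤ) ≤ i ∧ i < (N : ℤ)), {y : ℤ → X | y (i + 1) ∈ T (y i)} := by
    ext y
    simp only [orbSet, Set.mem_setOf_eq, Set.mem_inter_iff, Set.mem_iInter]
    tauto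
  rw [heq]
  exact h1.inter (isClosed_iInter fun i => isClosed_iInter fun _ => h2 i)

lemma orbSet_antitone {X : Type*} (T : X → Set X) (x : X) : Antitone (orbSet T x) := by
  intro N M h y hy
  exact ⟨hy.1, fun i h1 h2 => hy.2 i (by omega) (by omega)⟩

theorem stmt6 {X : Type*} [TopologicalSpace X] [CompactSpace X]
    [TopologicalSpace.MetrizableSpace X] (T : X → Set X)
    (hT : IsClosed {p : X × X | p.2 ∈ T p.1}) :
    (fun x : ℤ → X => x 0) '' {x : ℤ → X | ∀ i : ℤ, x (i + 1) ∈ T (x i)} =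
        (⋂ n : ℤ, svIter T n Set.univ) ∧
      ({x : ℤ → X | ∀ i : ℤ, x (i + 1) ∈ T (x i)}.Nonempty ↔
        (⋂ n : ℤ, svIter T n Set.univ).Nonempty) := by
  have key : (fun x : ℤ → X => x 0) '' {x : ℤ → X | ∀ i : ℤ, x (i + 1) ∈ T (x i)} =
      ⋂ n : ℤ, svIter T n Set.univ := by
    apply Set.Subset.antisymm
    · rintro x ⟨y, hy, rfl⟩
      simp only [Set.mem_iInter]
      intro n
      by_cases hn : 0 ≤ n
      · rw [svIter, if_pos hn]
        refine (mem_fwd_iter T _ _).mpr ⟨fun j => y ((j : ℤ) - n), ?_, ?_⟩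
        · show y ((n.toNat : ℤ) - n) = y 0
          rw [Int.toNat_of_nonneg hn]; simp
        · intro i hi
          have e : ((i + 1 : ℕ) : ℤ) - n = ((i : ℤ) - n) + 1 := by push_cast; ring
          show y (((i + 1 : ℕ) : ℤ) - n) ∈ T (y ((i : ℤ) - n))
          rw [e]; exact hy _
      · rw [svIter, if_neg hn]
        refine (mem_pre_iter T _ _).mpr ⟨fun j => y (j : ℤ), by norm_num, ?_⟩
        intro i hi
        have e : ((i + 1 : ℕ) : ℤ) = (i : ℤ) + 1 := by push_cast; ring
        show y ((i + 1 : ℕ) : ℤ) ∈ T (y (i : ℤ))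
        rw [e]; exact hy _
    · intro x hx
      have hx' : ∀ n : ℤ, x ∈ svIter T n Set.univ := Set.mem_iInter.mp hx
      have hfs : ∀ N : ℕ, ∃ c : ℕ → X, c N = x ∧ ∀ i < N, c (i + 1) ∈ T (c i) := by
        intro N
        have := hx' (N : ℤ)
        rw [svIter, if_pos (by positivity), Int.toNat_natCast] at this
        exact (mem_fwd_iter T N x).mp this
      have hps : ∀ N : ℕ, ∃ c : ℕ → X, c 0 = x ∧ ∀ i < N, c (i + 1) ∈ T (c i) := by
        intro N
        rcases Nat.eq_zero_or_pos N with h0 | h0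
        · exact ⟨fun _ => x, rfl, fun i hi => absurd hi (by omega)⟩
        · have := hx' (-(N : ℤ))
          rw [svIter, if_neg (by omega), neg_neg, Int.toNat_natCast] at this
          exact (mem_pre_iter T N x).mp this
      have hne : ∀ N : ℕ, (orbSet T x N).Nonempty := by
        intro N
        obtain ⟨b, hbN, hb⟩ := hfs N
        obtain ⟨f, hf0, hf⟩ := hps N
        refine ⟨fun i => if 0 ≤ i then f i.toNat else b ((N : ℤ) + i).toNat, by simpa, ?_⟩
        intro i h1 h2
        by_cases hi : 0 ≤ i
        · have h3 : 0 ≤ i + 1 := by omega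
          simp only [if_pos hi, if_pos h3]
          have e : (i + 1).toNat = i.toNat + 1 := by omega
          rw [e]; exact hf i.toNat (by omega)
        · by_cases hi1 : 0 ≤ i + 1
          · have hi' : i = -1 := by omega
            subst hi'
            simp only [if_pos hi1, if_neg hi]
            have hN : 1 ≤ N := by omega
            have e1 : ((-1 : ℤ) + 1).toNat = 0 := by norm_num
            have e2 : ((N : ℤ) + -1).toNat = N - 1 := by omega
            rw [e1, e2, hf0, ← hbN]
            have := hb (N - 1) (by omega)
            rwa [show N - 1 + 1 = N from by omega] at this
          · simp only [if_neg hi, if_neg hi1]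
            have e : ((N : ℤ) + (i + 1)).toNat = ((N : ℤ) + i).toNat + 1 := by omega
            rw [e]
            exact hb _ (by omega)
      have hd : Directed (· ⊇ ·) (orbSet T x) := (orbSet_antitone T x).directed_ge
      obtain ⟨y, hy⟩ := IsCompact.nonempty_iInter_of_directed_nonempty_isCompact_isClosed
        (orbSet T x) hd hne (fun N => (orbSet_closed T hT x N).isCompact)
        (fun N => orbSet_closed T hT x N)
      have hy' : ∀ N : ℕ, y ∈ orbSet T x N := Set.mem_iInter.mp hy
      refine ⟨y, ?_, (hy' 0).1⟩
      intro i
      exact (hy' (i.natAbs + 1)).2 i (by omega) (by omega)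
  exact ⟨key, by rw [← key]; exact Set.image_nonempty.symm⟩
end

section
/- Let X be a compact metrizable space and T : X → 2^X with closed graph. A Borel probability measure μ on X satisfies μ(A) ≤ μ(T^{-1}A) for all Borel A if and only if μ(A) ≤ μ(T A) for all Borel A, where T A = ⋃_{x∈A} T(x) and T^{-1}A = ⋃_{x∈A} T^{-1}(x). -/
open MeasureTheory

theorem stmt9 {X : Type*} [TopologicalSpace X] [CompactSpace X]
    [TopologicalSpace.MetrizableSpace X] [MeasurableSpace X] [BorelSpace X]
    (T : X → Set X) (hT : IsClosed {p : X × X | p.2 ∈ T p.1})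
    (μ : Measure X) [IsProbabilityMeasure μ] :
    (∀ A : Set X, MeasurableSet A → μ A ≤ μ {z : X | ∃ a ∈ A, a ∈ T z}) ↔
      (∀ A : Set X, MeasurableSet A → μ A ≤ μ {y : X | ∃ x ∈ A, y ∈ T x}) := by
  constructor
  · intro h A hA
    set C := toMeasurable μ {y : X | ∃ x ∈ A, y ∈ T x} with hCdef
    have hCmeas : MeasurableSet C := measurableSet_toMeasurable _ _
    have hsub : {z : X | ∃ a ∈ Cᶜ, a ∈ T z} ⊆ Aᶜ := by
      rintro z ⟨a, haC, haT⟩ hzA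
      exact haC (subset_toMeasurable μ _ ⟨z, hzA, haT⟩)
    have key : μ Cᶜ ≤ μ Aᶜ :=
      le_trans (h Cᶜ hCmeas.compl) (measure_mono hsub)
    have hCc : μ Cᶜ = 1 - μ C := by
      rw [measure_compl hCmeas (measure_ne_top μ C), measure_univ]
    have hAc : μ Aᶜ = 1 - μ A := by
      rw [measure_compl hA (measure_ne_top μ A), measure_univ]
    rw [hCc, hAc] at key
    have h1 : μ A ≤ μ C := by
      have hC1 : μ C ≤ 1 := prob_le_one
      have hA1 : μ A ≤ 1 := prob_le_one
      exact (ENNReal.sub_le_sub_iff_left hA1 (by norm_num : (1 : ENNReal) ≠ ⊤)).mp key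
    calc μ A ≤ μ C := h1
      _ = μ {y : X | ∃ x ∈ A, y ∈ T x} := measure_toMeasurable _
  · intro h A hA
    set C := toMeasurable μ {z : X | ∃ a ∈ A, a ∈ T z} with hCdef
    have hCmeas : MeasurableSet C := measurableSet_toMeasurable _ _
    have hsub : {y : X | ∃ x ∈ Cᶜ, y ∈ T x} ⊆ Aᶜ := by
      rintro y ⟨x, hxC, hyT⟩ hyA
      exact hxC (subset_toMeasurable μ _ ⟨y, hyA, hyT⟩)
    have key : μ Cᶜ ≤ μ Aᶜ :=
      le_trans (h Cᶜ hCmeas.compl) (measure_mono hsub)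
    have hCc : μ Cᶜ = 1 - μ C := by
      rw [measure_compl hCmeas (measure_ne_top μ C), measure_univ]
    have hAc : μ Aᶜ = 1 - μ A := by
      rw [measure_compl hA (measure_ne_top μ A), measure_univ]
    rw [hCc, hAc] at key
    have h1 : μ A ≤ μ C := by
      have hA1 : μ A ≤ 1 := prob_le_one
      exact (ENNReal.sub_le_sub_iff_left hA1 (by norm_num : (1 : ENNReal) ≠ ⊤)).mp key
    calc μ A ≤ μ C := h1
      _ = μ {z : X | ∃ a ∈ A, a ∈ T z} := measure_toMeasurable _
end

section
/- Let X be a compact metrizable space and T : X → 2^X an open set-valued map (T(A) := ⋃_{x∈A}T(x) is open for every open A ⊆ X). Then the cardinality function x ↦ #T^{-1}(x), taking values in ℤ_{≥0} ∪ {∞}, is lower semi-continuous: if y_n → y then #T^{-1}(y) ≤ liminf_n #T^{-1}(y_n). -/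
open Filter Topology

/-!
Fix a finite set `t` of preimages of `l` and separate its points by pairwise disjoint open sets
`U x`. Each `T(U x)` is an open neighbourhood of `l`, so every `w` close to `l` has a preimage in
every `U x`; these preimages are distinct, so `w` has at least `#t` preimages.
-/

section

variable {X Y : Type*} [TopologicalSpace X] [T2Space X] [TopologicalSpace Y]
  {T : X → Set Y}

theorem eventually_encard_le_encard_fiber
    (hT : ∀ A : Set X, IsOpen A → IsOpen {y : Y | ∃ x ∈ A, y ∈ T x})
    {l : Y} {t : Set X} (ht : t.Finite) (hts : t ⊆ {x | l ∈ T x}) :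
    ∀ᶠ w in 𝓝 l, t.encard ≤ {x | w ∈ T x}.encard := by
  obtain ⟨U, hU, hdisj⟩ := ht.t2_separation
  have hnhds : ∀ x ∈ t, ∀ᶠ w in 𝓝 l, ∃ z ∈ U x, w ∈ T z := fun x hx =>
    (hT _ (hU x).2).mem_nhds ⟨x, (hU x).1, hts hx⟩
  filter_upwards [(eventually_all_finite ht).mpr hnhds] with w hw
  choose! z hzU hzT using hw
  refine Set.encard_le_encard_of_injOn hzT fun a ha b hb hab => ?_
  by_contra hne
  exact Set.disjoint_left.mp (hdisj ha hb hne) (hzU a ha) (hab ▸ hzU b hb)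

theorem lowerSemicontinuous_encard_fiber
    (hT : ∀ A : Set X, IsOpen A → IsOpen {y : Y | ∃ x ∈ A, y ∈ T x}) :
    LowerSemicontinuous fun y => {x | y ∈ T x}.encard := by
  intro l c hc
  have hc_top : c ≠ ⊤ := hc.ne_top
  obtain ⟨t, hts, htc⟩ := Set.exists_subset_encard_eq ((ENat.add_one_le_iff hc_top).mpr hc)
  have ht : t.Finite := Set.encard_ne_top_iff.mp <| by simpa [htc] using hc_top
  filter_upwards [eventually_encard_le_encard_fiber hT ht hts] with w hw
  exact (ENat.add_one_le_iff hc_top).mp (htc ▸ hw)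

end

theorem stmt14_general {X : Type*} [TopologicalSpace X]
    [TopologicalSpace.MetrizableSpace X] (T : X → Set X)
    (hopen : ∀ A : Set X, IsOpen A → IsOpen {y : X | ∃ x ∈ A, y ∈ T x}) :
    ∀ (y : ℕ → X) (l : X), Tendsto y atTop (𝓝 l) →
      {x : X | l ∈ T x}.encard ≤ Filter.liminf (fun n => {x : X | y n ∈ T x}.encard) atTop := by
  intro y l hy
  calc {x : X | l ∈ T x}.encard
      ≤ liminf (fun w => {x : X | w ∈ T x}.encard) (𝓝 l) :=
        (lowerSemicontinuous_encard_fiber hopen).le_liminf l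
    _ ≤ liminf (fun n => {x : X | y n ∈ T x}.encard) atTop := liminf_le_liminf_of_le hy

theorem stmt14 {X : Type*} [TopologicalSpace X] [CompactSpace X]
    [TopologicalSpace.MetrizableSpace X] (T : X → Set X)
    (hopen : ∀ A : Set X, IsOpen A → IsOpen {y : X | ∃ x ∈ A, y ∈ T x}) :
    ∀ (y : ℕ → X) (l : X), Tendsto y atTop (𝓝 l) →
      {x : X | l ∈ T x}.encard ≤ Filter.liminf (fun n => {x : X | y n ∈ T x}.encard) atTop :=
  stmt14_general T hopen
end

section
/- Let (X,d) be a compact metric space and T : X → 2^X upper semi-continuous (closed graph) and expanding with constants λ > 1, η > 0. Then x ↦ #T^{-1}(x) ∈ ℤ_{≥0} is upper semi-continuous: if y_n → y then #T^{-1}(y_n) ≤ #T^{-1}(y) for all sufficiently large n. -/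
open Filter Topology

theorem stmt16 {X : Type*} [MetricSpace X] [CompactSpace X] (T : X → Set X)
    (hT : IsClosed {p : X × X | p.2 ∈ T p.1})
    (lam η : ℝ) (hlam : 1 < lam) (hη : 0 < η)
    (hexp : ∀ x y : X, dist x y ≤ η → ∀ x' ∈ T x, ∀ y' ∈ T y, lam * dist x y ≤ dist x' y') :
    ∀ (y : ℕ → X) (l : X), Tendsto y atTop (𝓝 l) →
      ∀ᶠ n in atTop, {x : X | y n ∈ T x}.encard ≤ {x : X | l ∈ T x}.encard := by
  intro y l hy
  set S : Set X := {x : X | l ∈ T x} with hS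
  -- separation: two preimages of the same point within η are equal
  have sep : ∀ z x₁ x₂ : X, z ∈ T x₁ → z ∈ T x₂ → dist x₁ x₂ ≤ η → x₁ = x₂ := by
    intro z x₁ x₂ h1 h2 hd
    have h := hexp x₁ x₂ hd z h1 z h2
    rw [dist_self] at h
    have hd0 : dist x₁ x₂ ≤ 0 := by nlinarith [dist_nonneg (x := x₁) (y := x₂)]
    exact dist_le_zero.mp hd0
  set U : Set X := ⋃ s ∈ S, Metric.ball s (η/2) with hUdef
  have hUopen : IsOpen U := isOpen_biUnion fun _ _ => Metric.isOpen_ball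
  -- eventually all preimages of y n lie in U
  have hU : ∀ᶠ n in atTop, ∀ x, y n ∈ T x → x ∈ U := by
    by_contra h
    rw [Filter.not_eventually] at h
    have h' : ∃ᶠ n in atTop, ∃ x, y n ∈ T x ∧ x ∉ U := by
      refine h.mono fun n hn => ?_
      push_neg at hn
      exact hn
    obtain ⟨φ, hφ, hx⟩ := Filter.extraction_of_frequently_atTop h'
    choose x hx1 hx2 using hx
    obtain ⟨a, -, ψ, hψ, ha⟩ := isCompact_univ.tendsto_subseq (fun n => Set.mem_univ (x n))
    have hyl : Tendsto (fun n => y (φ (ψ n))) atTop (𝓝 l) :=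
      hy.comp ((hφ.comp hψ).tendsto_atTop)
    have hpair : Tendsto (fun n => ((x ∘ ψ) n, y (φ (ψ n)))) atTop (𝓝 (a, l)) :=
      ha.prodMk_nhds hyl
    have hmem : (a, l) ∈ {p : X × X | p.2 ∈ T p.1} :=
      hT.mem_of_tendsto hpair (Filter.Eventually.of_forall fun n => hx1 (ψ n))
    have haU : a ∈ U :=
      Set.mem_biUnion hmem (Metric.mem_ball_self (by linarith))
    have haU' : a ∈ Uᶜ :=
      hUopen.isClosed_compl.mem_of_tendsto ha
        (Filter.Eventually.of_forall fun n => hx2 (ψ n))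
    exact haU' haU
  filter_upwards [hU] with n hn
  -- choose for each preimage of y n a nearby point of S
  have hmap : ∀ x : X, ∃ s : X, y n ∈ T x → s ∈ S ∧ dist x s < η/2 := by
    intro x
    by_cases hx : y n ∈ T x
    · have := hn x hx
      rw [hUdef] at this
      obtain ⟨s, hsS, hs⟩ := Set.mem_iUnion₂.mp this
      exact ⟨s, fun _ => ⟨hsS, Metric.mem_ball.mp hs⟩⟩
    · exact ⟨x, fun h => absurd h hx⟩
  choose f hf using hmap
  apply Set.encard_le_encard_of_injOn (f := f)
  · intro x hx
    exact (hf x hx).1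
  · intro x₁ h₁ x₂ h₂ hfe
    have d1 := (hf x₁ h₁).2
    have d2 := (hf x₂ h₂).2
    have htri : dist x₁ x₂ ≤ dist x₁ (f x₁) + dist (f x₂) x₂ := by
      rw [hfe]; exact dist_triangle x₁ (f x₂) x₂
    rw [dist_comm (f x₂) x₂] at htri
    exact sep (y n) x₁ x₂ h₁ h₂ (by linarith)
end

section
/- Let (X,d) be a compact metric space and T : X → 2^X upper semi-continuous, open, and expanding with constants λ > 1, η > 0. Then there exists ε > 0 such that for all y, z ∈ X with d(y,z) < ε: #T^{-1}(y) = #T^{-1}(z) =: l, and if l ≥ 1 one can enumerate T^{-1}(y) = {x_1,…,x_l} and T^{-1}(z) = {w_1,…,w_l} with d(x_i, w_i) ≤ d(y,z)/λ for each i. -/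
/-!
Expansion with `λ > 0` forces two preimages of the same point to be more than `η` apart, so each
fibre `T⁻¹ y` is a compact, uniformly discrete set, hence finite. Openness of `T` together with
compactness of its graph gives, via a Lebesgue number, a uniform `ε` such that every preimage of
`y` has a preimage of any `ε`-close `z` within distance `η`; expansion then improves this to
`d(y, z) / λ`. Once `d(y, z) / λ < η / 2`, sending each preimage of `y` to such a nearby preimage
of `z` is injective and surjective, since any two candidates are `η`-close preimages of one point.
-/

open Set Metric Function

theorem Set.BijOn.exists_fin_enum {α β : Type*} {S : Set α} {S' : Set β} {f : α → β}
    (hf : BijOn f S S') (hS : S.Finite) :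
    ∃ (xe : Fin S.ncard → α) (we : Fin S.ncard → β), Injective xe ∧ Injective we ∧
      range xe = S ∧ range we = S' ∧ ∀ i, we i = f (xe i) := by
  have := hS.to_subtype
  let e : Fin S.ncard ≃ S := (Finite.equivFinOfCardEq (Nat.card_coe_set_eq S)).symm
  have hxe : Injective (Subtype.val ∘ e) := Subtype.val_injective.comp e.injective
  have hrange : range (Subtype.val ∘ e) = S := by
    rw [e.surjective.range_comp, Subtype.range_coe]
  refine ⟨Subtype.val ∘ e, f ∘ Subtype.val ∘ e, hxe, fun i j hij ↦ hxe ?_, hrange, ?_,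
    fun _ ↦ rfl⟩
  · exact hf.injOn (e i).2 (e j).2 hij
  · rw [range_comp, hrange, hf.image_eq]

section

variable {X : Type*} [MetricSpace X]

theorem IsCompact.finite_of_pairwise_le_dist {S : Set X} (hS : IsCompact S) {r : ℝ} (hr : 0 < r)
    (h : S.Pairwise (r ≤ dist · ·)) : S.Finite :=
  hS.finite ⟨DiscreteTopology.of_forall_le_dist hr fun a b hab ↦
    h a.2 b.2 (Subtype.coe_ne_coe.2 hab)⟩

theorem exists_bijOn_dist_le_of_separated {S S' : Set X} {r η : ℝ} (hr : 2 * r ≤ η)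
    (hS : ∀ a ∈ S, ∀ b ∈ S, dist a b ≤ η → a = b) (hS' : ∀ a ∈ S', ∀ b ∈ S', dist a b ≤ η → a = b)
    (h : ∀ x ∈ S, ∃ w ∈ S', dist x w ≤ r) (h' : ∀ w ∈ S', ∃ x ∈ S, dist w x ≤ r) :
    ∃ f : X → X, BijOn f S S' ∧ ∀ x ∈ S, dist x (f x) ≤ r := by
  choose! f hfS' hf using h
  refine ⟨f, ⟨hfS', fun a ha b hb hab ↦ hS a ha b hb ?_, fun w hw ↦ ?_⟩, hf⟩
  · calc dist a b ≤ dist a (f a) + dist b (f b) := by rw [hab]; exact dist_triangle_right _ _ _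
      _ ≤ η := by linarith [hf a ha, hf b hb]
  · obtain ⟨x, hx, hwx⟩ := h' w hw
    refine ⟨x, hx, hS' _ (hfS' x hx) w hw ?_⟩
    calc dist (f x) w ≤ dist x (f x) + dist w x := by
          rw [dist_comm w x]; exact dist_triangle_left _ _ _
      _ ≤ η := by linarith [hf x hx]

variable {T : X → Set X}

theorem exists_lift_dist_lt_of_isCompact_graph (hK : IsCompact {p : X × X | p.2 ∈ T p.1})
    (hopen : ∀ A : Set X, IsOpen A → IsOpen {y : X | ∃ x ∈ A, y ∈ T x}) {δ : ℝ} (hδ : 0 < δ) :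
    ∃ ε > 0, ∀ x y z, y ∈ T x → dist y z < ε → ∃ w, z ∈ T w ∧ dist x w < δ := by
  obtain ⟨ε, hε, hball⟩ := lebesgue_number_lemma_of_metric hK
    (c := fun x₀ ↦ ball x₀ (δ / 2) ×ˢ {v | ∃ u ∈ ball x₀ (δ / 2), v ∈ T u})
    (fun _ ↦ isOpen_ball.prod (hopen _ isOpen_ball))
    (fun p hp ↦ mem_iUnion.2
      ⟨p.1, mem_ball_self (half_pos hδ), p.1, mem_ball_self (half_pos hδ), hp⟩)
  refine ⟨ε, hε, fun x y z hy hyz ↦ ?_⟩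
  obtain ⟨x₀, hsub⟩ := hball (x, y) hy
  have hxz : (x, z) ∈ ball (x, y) ε := by
    rwa [mem_ball, Prod.dist_eq, dist_self, dist_comm, max_eq_right dist_nonneg]
  obtain ⟨hx, u, hu, hz⟩ := hsub hxz
  exact ⟨u, hz, by linarith [dist_triangle_right x u x₀, mem_ball.1 hx, mem_ball.1 hu]⟩

variable {lam η : ℝ} (hlam : 0 < lam)
  (hexp : ∀ x y : X, dist x y ≤ η → ∀ x' ∈ T x, ∀ y' ∈ T y, lam * dist x y ≤ dist x' y')
include hlam hexp

theorem eq_of_mem_of_mem_of_dist_le {x x' y : X} (hx : y ∈ T x) (hx' : y ∈ T x')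
    (hd : dist x x' ≤ η) : x = x' := by
  have h := hexp x x' hd y hx y hx'
  rw [dist_self] at h
  exact dist_le_zero.1 (nonpos_of_mul_nonpos_right h hlam)

theorem finite_setOf_mem [CompactSpace X] (hT : IsClosed {p : X × X | p.2 ∈ T p.1}) (hη : 0 < η)
    (y : X) : {x | y ∈ T x}.Finite := by
  refine (hT.preimage (Continuous.prodMk_left y)).isCompact.finite_of_pairwise_le_dist hη ?_
  intro a ha b hb hab
  by_contra! h
  exact hab (eq_of_mem_of_mem_of_dist_le hlam hexp ha hb h.le)

theorem exists_lift_dist_le_div [CompactSpace X] (hT : IsClosed {p : X × X | p.2 ∈ T p.1})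
    (hopen : ∀ A : Set X, IsOpen A → IsOpen {y : X | ∃ x ∈ A, y ∈ T x}) (hη : 0 < η) :
    ∃ ε > 0, ∀ x y z, y ∈ T x → dist y z < ε → ∃ w, z ∈ T w ∧ dist x w ≤ dist y z / lam := by
  obtain ⟨ε, hε, hlift⟩ := exists_lift_dist_lt_of_isCompact_graph hT.isCompact hopen hη
  refine ⟨ε, hε, fun x y z hy hyz ↦ ?_⟩
  obtain ⟨w, hz, hxw⟩ := hlift x y z hy hyz
  exact ⟨w, hz, (le_div_iff₀ hlam).2 (by linarith [hexp x w hxw.le y hy z hz])⟩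

end

theorem stmt17 {X : Type*} [MetricSpace X] [CompactSpace X] (T : X → Set X)
    (hT : IsClosed {p : X × X | p.2 ∈ T p.1})
    (hopen : ∀ A : Set X, IsOpen A → IsOpen {y : X | ∃ x ∈ A, y ∈ T x})
    (lam η : ℝ) (hlam : 1 < lam) (hη : 0 < η)
    (hexp : ∀ x y : X, dist x y ≤ η → ∀ x' ∈ T x, ∀ y' ∈ T y, lam * dist x y ≤ dist x' y') :
    ∃ ε > 0, ∀ y z : X, dist y z < ε →
      ∃ l : ℕ, {x : X | y ∈ T x}.encard = l ∧ {x : X | z ∈ T x}.encard = l ∧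
        (1 ≤ l → ∃ xe we : Fin l → X,
          Function.Injective xe ∧ Function.Injective we ∧
          Set.range xe = {x : X | y ∈ T x} ∧ Set.range we = {x : X | z ∈ T x} ∧
          ∀ i : Fin l, dist (xe i) (we i) ≤ dist y z / lam) := by
  have hlam0 : 0 < lam := one_pos.trans hlam
  have sep {y : X} : ∀ a ∈ {x | y ∈ T x}, ∀ b ∈ {x | y ∈ T x}, dist a b ≤ η → a = b :=
    fun _ ha _ hb ↦ eq_of_mem_of_mem_of_dist_le hlam0 hexp ha hb
  obtain ⟨ε, hε, hlift⟩ := exists_lift_dist_le_div hlam0 hexp hT hopen hη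
  refine ⟨min ε (lam * η / 2), by positivity, fun y z hyz ↦ ?_⟩
  have hr : 2 * (dist y z / lam) ≤ η := by
    rw [← mul_div_assoc, div_le_iff₀ hlam0]
    linarith [hyz.trans_le (min_le_right _ _)]
  have hyzε : dist y z < ε := hyz.trans_le (min_le_left _ _)
  obtain ⟨f, hf, hfdist⟩ := exists_bijOn_dist_le_of_separated hr sep sep
    (fun x hx ↦ hlift x y z hx hyzε)
    (fun w hw ↦ by
      simpa only [dist_comm z y, mem_ofPred_eq] using hlift w z y hw (by rwa [dist_comm]))
  have hfin := finite_setOf_mem hlam0 hexp hT hη y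
  refine ⟨_, hfin.cast_ncard_eq.symm, (hfin.cast_ncard_eq.trans (encard_congr hf.equiv)).symm,
    fun _ ↦ ?_⟩
  obtain ⟨xe, we, hxe, hwe, hxr, hwr, hfe⟩ := hf.exists_fin_enum hfin
  exact ⟨xe, we, hxe, hwe, hxr, hwr, fun i ↦ hfe i ▸ hfdist _ (hxr ▸ mem_range_self i)⟩
end

section
/- Let (X,d) be a compact metric space and T : X → 2^X upper semi-continuous, open, and expanding. For every α ∈ (0,1] and every α-Hölder function f : X → ℝ, there exists an α-Hölder function v : X → ℝ such that f(x) + v(x) − v(y) ≤ β(f) for all (x,y) ∈ gr(T), where β(f) = sup_{μ ∈ M_T} ∫ f dμ (with sup ∅ = −∞, and the inequality interpreted trivially if M_T = ∅). -/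
/-!
Put `β = sup ∫ f dμ` over the invariant measures and `g = f - β`, and let `v y` be the supremum of
`g x₁ + ⋯ + g xₙ` over all backward orbits `y ∈ T x₁, x₁ ∈ T x₂, …, xₙ₋₁ ∈ T xₙ`. Prepending `x`
to a backward orbit of `x` gives `g x + v x ≤ v y` whenever `y ∈ T x`, which is the inequality.

The uniform average of the Dirac masses along a periodic orbit is invariant, so the sum of `g`
along a periodic orbit is nonpositive. Since `T` is open with closed graph, inverse branches exist
on balls of a uniform radius, and expansion makes them contract. Hence an orbit segment returning
close to its start is shadowed by a periodic orbit (a fixed point of the composed inverse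
branches), and Hölder continuity bounds the difference of the two sums by a geometric series.
Pigeonholing over a finite cover by small balls shows that `v` is bounded, and pulling a backward
orbit of `y` back along the inverse branches to one of a nearby `y'` shows that `v` is
`α`-Hölder at small scales, hence everywhere.
-/

open MeasureTheory Metric Finset Filter Topology
open scoped ENNReal

def IsHolder {X : Type*} [PseudoMetricSpace X] (α : ℝ) (f : X → ℝ) : Prop :=
  ∃ K > (0 : ℝ), ∀ x y, |f x - f y| ≤ K * dist x y ^ α

section Holder

variable {X : Type*} [PseudoMetricSpace X] {α K : ℝ} {f : X → ℝ}

theorem continuous_of_abs_sub_le_mul_rpow (hα : 0 < α)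
    (hf : ∀ x y, |f x - f y| ≤ K * dist x y ^ α) : Continuous f := by
  refine continuous_iff_continuousAt.2 fun x => tendsto_iff_dist_tendsto_zero.2 <|
    squeeze_zero (fun _ => dist_nonneg) (fun y => hf y x) ?_
  have h : Tendsto (fun y => dist y x) (𝓝 x) (𝓝 0) := by
    simpa using (continuous_id.dist continuous_const).tendsto' x 0 (by simp)
  simpa [Real.zero_rpow hα.ne'] using (h.rpow_const (Or.inr hα.le)).const_mul K

theorem sum_le_sum_add_of_dist_le_geometric {θ D : ℝ} {n : ℕ} {a b : ℕ → X}
    (hf : ∀ x y, |f x - f y| ≤ K * dist x y ^ α) (hK : 0 ≤ K) (hα : 0 < α)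
    (hθ₀ : 0 ≤ θ) (hθ₁ : θ < 1) (hD : 0 ≤ D) (hab : ∀ k < n, dist (a k) (b k) ≤ θ ^ k * D) :
    ∑ k ∈ range n, f (a k) ≤ ∑ k ∈ range n, f (b k) + K / (1 - θ ^ α) * D ^ α := by
  have hq₀ : 0 ≤ θ ^ α := Real.rpow_nonneg hθ₀ α
  have hq₁ : θ ^ α < 1 := Real.rpow_lt_one hθ₀ hθ₁ hα
  have hterm : ∀ k ∈ range n, f (a k) ≤ f (b k) + K * D ^ α * (θ ^ α) ^ k := by
    intro k hk
    have hdist : dist (a k) (b k) ^ α ≤ (θ ^ α) ^ k * D ^ α := by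
      rw [Real.rpow_pow_comm hθ₀ α k, ← Real.mul_rpow (pow_nonneg hθ₀ k) hD]
      exact Real.rpow_le_rpow dist_nonneg (hab k (mem_range.1 hk)) hα.le
    nlinarith [(abs_le.1 (hf (a k) (b k))).2, mul_le_mul_of_nonneg_left hdist hK]
  have hgeom : ∑ k ∈ range n, (θ ^ α) ^ k ≤ 1 / (1 - θ ^ α) := by
    rw [range_eq_Ico]
    simpa using geom_sum_Ico_le_of_lt_one (m := 0) (n := n) hq₀ hq₁
  calc ∑ k ∈ range n, f (a k)
      ≤ ∑ k ∈ range n, (f (b k) + K * D ^ α * (θ ^ α) ^ k) := sum_le_sum hterm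
    _ = ∑ k ∈ range n, f (b k) + K * D ^ α * ∑ k ∈ range n, (θ ^ α) ^ k := by
      rw [sum_add_distrib, mul_sum]
    _ ≤ ∑ k ∈ range n, f (b k) + K * D ^ α * (1 / (1 - θ ^ α)) := by
      gcongr
    _ = ∑ k ∈ range n, f (b k) + K / (1 - θ ^ α) * D ^ α := by ring

theorem isHolder_of_local_of_bounded {δ C B : ℝ} {v : X → ℝ} (hα : 0 ≤ α) (hδ : 0 < δ) (hC : 0 ≤ C)
    (hB : ∀ x y, |v x - v y| ≤ B)
    (hloc : ∀ x y, dist x y ≤ δ → v x ≤ v y + C * dist x y ^ α) : IsHolder α v := by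
  have hδα : 0 < δ ^ α := Real.rpow_pos_of_pos hδ α
  refine ⟨C + |B| / δ ^ α + 1, by positivity, fun x y => ?_⟩
  have hdα : 0 ≤ dist x y ^ α := Real.rpow_nonneg dist_nonneg α
  have hBδ : 0 ≤ |B| / δ ^ α * dist x y ^ α := by positivity
  rcases le_or_gt (dist x y) δ with hd | hd
  · have hyx := hloc y x (by rwa [dist_comm])
    rw [dist_comm] at hyx
    rw [abs_le]
    constructor <;> nlinarith [hloc x y hd]
  · have hfar : |B| ≤ |B| / δ ^ α * dist x y ^ α := by
      rw [div_mul_eq_mul_div, le_div_iff₀ hδα]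
      exact mul_le_mul_of_nonneg_left (Real.rpow_le_rpow hδ.le hd.le hα) (abs_nonneg B)
    nlinarith [hB x y, le_abs_self B, mul_nonneg hC hdα]

end Holder

theorem sum_range_le_card_mul_of_returns {ι : Type*} [DecidableEq ι] {a : ℕ → ℝ} {u : ℕ → ι}
    {G s : ℝ} (hGs : 0 ≤ G + s) (ha : ∀ r, a r ≤ G) (S : Finset ι) (n : ℕ)
    (hu : ∀ r < n, u r ∈ S)
    (hret : ∀ i L, i + L < n → u i = u (i + L) → ∑ r ∈ range L, a (i + r) ≤ s) :
    ∑ r ∈ range n, a r ≤ #S * (G + s) := by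
  induction n using Nat.strong_induction_on generalizing S a u with
  | _ n ih =>
  rcases Nat.eq_zero_or_pos n with rfl | hn
  · simpa using mul_nonneg (Nat.cast_nonneg _) hGs
  -- `j` is the last time before `n` at which the sequence `u` returns to `u 0`
  set j := Nat.findGreatest (fun j => u j = u 0) (n - 1)
  have hj : u j = u 0 := Nat.findGreatest_spec (P := fun j => u j = u 0) (Nat.zero_le _) rfl
  have hjn : j < n := by have := Nat.findGreatest_le (P := fun j => u j = u 0) (n - 1); omega
  set m := n - (j + 1)
  have hhead : ∑ r ∈ range j, a r ≤ s := by simpa using hret 0 j (by omega) (by simpa using hj.symm)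
  have htail : ∑ r ∈ range m, a (j + 1 + r) ≤ #(S.erase (u 0)) * (G + s) := by
    refine ih m (by omega) (a := fun r => a (j + 1 + r)) (u := fun r => u (j + 1 + r))
      (fun r => ha _) _ (fun r hr => mem_erase.2 ⟨?_, hu _ (by omega)⟩) fun i L hiL hiu => ?_
    · exact Nat.findGreatest_is_greatest (P := fun j => u j = u 0) (n := n - 1)
        (by omega) (by omega)
    · simpa only [add_assoc] using
        hret (j + 1 + i) L (by omega) (by simpa only [add_assoc] using hiu)
  have hcard : (#(S.erase (u 0)) : ℝ) + 1 = #S := by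
    exact_mod_cast card_erase_add_one (hu 0 hn)
  rw [show n = j + 1 + m by omega, sum_range_add, sum_range_succ, ← hcard]
  nlinarith [ha j]

theorem sum_range_succ_eq_sum_range_of_eq {M : Type*} [AddCommMonoid M] {h : ℕ → M} {L : ℕ}
    (hL : h L = h 0) : ∑ k ∈ range L, h (k + 1) = ∑ k ∈ range L, h k := by
  cases L with
  | zero => rfl
  | succ m => rw [sum_range_succ, sum_range_succ', hL, add_comm]

def IsBackwardOrbit {X : Type*} (T : X → Set X) (n : ℕ) (c : ℕ → X) : Prop :=
  ∀ k < n, c k ∈ T (c (k + 1))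

section Measures

variable {X : Type*} [MeasurableSpace X]

def IsMultiInvariant (T : X → Set X) (μ : Measure X) : Prop :=
  ∀ A : Set X, MeasurableSet A → μ A ≤ μ {z : X | ∃ a ∈ A, a ∈ T z}

def invariantIntegrals (T : X → Set X) (f : X → ℝ) : Set ℝ :=
  {r : ℝ | ∃ μ : Measure X, IsProbabilityMeasure μ ∧ IsMultiInvariant T μ ∧ ∫ z, f z ∂μ = r}

theorem bddAbove_invariantIntegrals (T : X → Set X) {f : X → ℝ} {M : ℝ} (hf : ∀ x, ‖f x‖ ≤ M) :
    BddAbove (invariantIntegrals T f) := by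
  refine ⟨M, ?_⟩
  rintro _ ⟨μ, hμ, -, rfl⟩
  simpa using (le_abs_self _).trans (norm_integral_le_of_norm_le_const (μ := μ) (ae_of_all _ hf))

end Measures

section Periodic

variable {X : Type*} [MeasurableSpace X] [MeasurableSingletonClass X] {T : X → Set X}
  {L : ℕ} {π : ℕ → X}

theorem exists_invariant_measure_of_periodic (f : X → ℝ) (hL : 0 < L)
    (hπ : IsBackwardOrbit T L π) (hper : π L = π 0) :
    ∃ μ : Measure X, IsProbabilityMeasure μ ∧ IsMultiInvariant T μ ∧
      ∫ z, f z ∂μ = (L : ℝ)⁻¹ * ∑ k ∈ range L, f (π k) := by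
  set μ : Measure X := (L : ℝ≥0∞)⁻¹ • ∑ k ∈ range L, Measure.dirac (π k)
  have hμ : ∀ s, μ s = (L : ℝ≥0∞)⁻¹ * ∑ k ∈ range L, Measure.dirac (π k) s := by
    intro s
    simp [μ]
  refine ⟨μ, ⟨?_⟩, fun A hA => ?_, ?_⟩
  · rw [hμ]
    simpa using ENNReal.inv_mul_cancel (Nat.cast_ne_zero.2 hL.ne') (ENNReal.natCast_ne_top L)
  · set R := {z | ∃ a ∈ A, a ∈ T z}
    have hstep : ∀ k < L, Measure.dirac (π k) A ≤ Measure.dirac (π (k + 1)) R := by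
      intro k hk
      by_cases hkA : π k ∈ A
      · rw [Measure.dirac_apply_of_mem hkA,
          Measure.dirac_apply_of_mem (show π (k + 1) ∈ R from ⟨π k, hkA, hπ k hk⟩)]
      · simp [Measure.dirac_apply' _ hA, hkA]
    rw [hμ, hμ, ← sum_range_succ_eq_sum_range_of_eq (h := fun k => Measure.dirac (π k) R)
      (by simp only [hper])]
    gcongr _ * ?_
    exact sum_le_sum fun k hk => hstep k (mem_range.1 hk)
  · rw [integral_smul_measure, integral_finsetSum_measure fun k _ => integrable_dirac enorm_lt_top]
    simp [integral_dirac]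

theorem sum_sub_le_zero_of_periodic {f : X → ℝ} {β : ℝ}
    (hβ : ∀ μ : Measure X, IsProbabilityMeasure μ → IsMultiInvariant T μ → ∫ z, f z ∂μ ≤ β)
    (hL : 0 < L) (hπ : IsBackwardOrbit T L π) (hper : π L = π 0) :
    ∑ k ∈ range L, (f (π k) - β) ≤ 0 := by
  obtain ⟨μ, hμ, hinv, hint⟩ := exists_invariant_measure_of_periodic f hL hπ hper
  have hle := hβ μ hμ hinv
  rw [hint, inv_mul_le_iff₀ (by exact_mod_cast hL)] at hle
  simpa [sum_sub_distrib] using hle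

end Periodic

section SubAction

variable {X : Type*} {T : X → Set X} {g : X → ℝ}

def backwardSums (T : X → Set X) (g : X → ℝ) (y : X) : Set ℝ :=
  {s | ∃ n c, c 0 = y ∧ IsBackwardOrbit T n c ∧ ∑ k ∈ range n, g (c (k + 1)) = s}

noncomputable def subAction (T : X → Set X) (g : X → ℝ) (y : X) : ℝ :=
  sSup (backwardSums T g y)

theorem zero_mem_backwardSums (y : X) : (0 : ℝ) ∈ backwardSums T g y :=
  ⟨0, fun _ => y, rfl, fun _ hk => absurd hk (Nat.not_lt_zero _), by simp⟩

theorem bddAbove_backwardSums {B : ℝ}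
    (hB : ∀ n c, IsBackwardOrbit T n c → ∑ k ∈ range n, g (c (k + 1)) ≤ B) (y : X) :
    BddAbove (backwardSums T g y) :=
  ⟨B, by rintro _ ⟨n, c, -, hc, rfl⟩; exact hB n c hc⟩

theorem le_subAction {y : X} {s : ℝ} (hbdd : BddAbove (backwardSums T g y))
    (hs : s ∈ backwardSums T g y) : s ≤ subAction T g y :=
  le_csSup hbdd hs

theorem subAction_nonneg {y : X} (hbdd : BddAbove (backwardSums T g y)) : 0 ≤ subAction T g y :=
  le_subAction hbdd (zero_mem_backwardSums y)

theorem subAction_le {B : ℝ}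
    (hB : ∀ n c, IsBackwardOrbit T n c → ∑ k ∈ range n, g (c (k + 1)) ≤ B) (y : X) :
    subAction T g y ≤ B :=
  csSup_le ⟨0, zero_mem_backwardSums y⟩ (by rintro _ ⟨n, c, -, hc, rfl⟩; exact hB n c hc)

theorem abs_subAction_sub_le {B : ℝ}
    (hB : ∀ n c, IsBackwardOrbit T n c → ∑ k ∈ range n, g (c (k + 1)) ≤ B) (x y : X) :
    |subAction T g x - subAction T g y| ≤ B := by
  have hbdd := bddAbove_backwardSums hB
  rw [abs_sub_le_iff]
  constructor <;> linarith [subAction_le hB x, subAction_le hB y,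
    subAction_nonneg (hbdd x), subAction_nonneg (hbdd y)]

theorem add_subAction_le {x y : X} (hbdd : BddAbove (backwardSums T g y)) (hxy : y ∈ T x) :
    g x + subAction T g x ≤ subAction T g y := by
  rw [← le_sub_iff_add_le']
  refine csSup_le ⟨0, zero_mem_backwardSums x⟩ ?_
  rintro _ ⟨n, c, rfl, hc, rfl⟩
  let c' : ℕ → X := fun | 0 => y | k + 1 => c k
  have hc' : IsBackwardOrbit T (n + 1) c' := fun
    | 0, _ => hxy
    | k + 1, hk => hc k (by omega)
  have hmem : g (c 0) + ∑ k ∈ range n, g (c (k + 1)) ∈ backwardSums T g y :=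
    ⟨n + 1, c', rfl, hc', by rw [sum_range_succ', add_comm]⟩
  linarith [le_subAction hbdd hmem]

end SubAction

section Expanding

variable {X : Type*} [MetricSpace X] {T : X → Set X}

theorem exists_near_preimage [CompactSpace X] (hT : IsClosed {p : X × X | p.2 ∈ T p.1})
    (hopen : ∀ A : Set X, IsOpen A → IsOpen {y : X | ∃ x ∈ A, y ∈ T x}) {η : ℝ} (hη : 0 < η) :
    ∃ δ > 0, ∀ x y y', y ∈ T x → dist y y' ≤ δ → ∃ x', y' ∈ T x' ∧ dist x x' ≤ η := by
  obtain ⟨ε, hε, hleb⟩ := lebesgue_number_lemma_of_metric hT.isCompact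
    (c := fun a : X => ball a (η / 2) ×ˢ {y | ∃ x ∈ ball a (η / 2), y ∈ T x})
    (fun a => isOpen_ball.prod (hopen _ isOpen_ball))
    fun p hp => Set.mem_iUnion.2
      ⟨p.1, mem_ball_self (half_pos hη), p.1, mem_ball_self (half_pos hη), hp⟩
  refine ⟨ε / 2, half_pos hε, fun x y y' hy hyy' => ?_⟩
  obtain ⟨a, ha⟩ := hleb (x, y) hy
  have hnear : (x, y') ∈ ball (x, y) ε := by
    rw [mem_ball, Prod.dist_eq, dist_self, dist_comm]
    exact max_lt hε (by linarith)
  obtain ⟨hxa, x', hx'a, hy'⟩ := ha hnear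
  refine ⟨x', hy', (dist_triangle_right x x' a).trans ?_⟩
  linarith [mem_ball.1 hxa, mem_ball.1 hx'a]

structure HasContractingBranches (T : X → Set X) (θ δ : ℝ) : Prop where
  nonneg : 0 ≤ θ
  lt_one : θ < 1
  pos : 0 < δ
  lift : ∀ x y y', y ∈ T x → dist y y' ≤ δ → ∃ x', y' ∈ T x' ∧ dist x x' ≤ θ * dist y y'
  expand : ∀ x x', dist x x' ≤ 2 * δ → ∀ y ∈ T x, ∀ y' ∈ T x', dist x x' ≤ θ * dist y y'

theorem exists_hasContractingBranches [CompactSpace X]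
    (hT : IsClosed {p : X × X | p.2 ∈ T p.1})
    (hopen : ∀ A : Set X, IsOpen A → IsOpen {y : X | ∃ x ∈ A, y ∈ T x})
    (hexp : ∃ lam > (1 : ℝ), ∃ η > (0 : ℝ), ∀ x y : X, dist x y ≤ η →
      ∀ x' ∈ T x, ∀ y' ∈ T y, lam * dist x y ≤ dist x' y') :
    ∃ θ δ, HasContractingBranches T θ δ := by
  obtain ⟨lam, hlam, η, hη, hexp⟩ := hexp
  obtain ⟨δ, hδ, hnear⟩ := exists_near_preimage hT hopen hη
  have hcontr : ∀ x x', dist x x' ≤ η → ∀ y ∈ T x, ∀ y' ∈ T x', dist x x' ≤ lam⁻¹ * dist y y' := by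
    intro x x' hxx' y hy y' hy'
    rw [inv_mul_eq_div, le_div_iff₀ (by linarith), mul_comm]
    exact hexp x x' hxx' y hy y' hy'
  refine ⟨lam⁻¹, min δ (η / 2), ⟨by positivity, inv_lt_one_of_one_lt₀ hlam,
    lt_min hδ (half_pos hη), fun x y y' hy hyy' => ?_, fun x x' hxx' => ?_⟩⟩
  · obtain ⟨x', hy', hxx'⟩ := hnear x y y' hy (hyy'.trans (min_le_left _ _))
    exact ⟨x', hy', hcontr x x' hxx' y hy y' hy'⟩
  · exact hcontr x x' (hxx'.trans (by linarith [min_le_right δ (η / 2)]))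

theorem dist_le_pow_mul_of_isBackwardOrbit {θ η : ℝ} {n : ℕ} {c c' : ℕ → X}
    (hexp : ∀ x x', dist x x' ≤ η → ∀ y ∈ T x, ∀ y' ∈ T x', dist x x' ≤ θ * dist y y')
    (hθ : 0 ≤ θ) (hc : IsBackwardOrbit T n c) (hc' : IsBackwardOrbit T n c')
    (hnear : ∀ k ≤ n, dist (c k) (c' k) ≤ η) :
    ∀ k ≤ n, dist (c k) (c' k) ≤ θ ^ k * dist (c 0) (c' 0) := by
  intro k
  induction k with
  | zero => simp
  | succ k ih =>
    intro hk
    calc dist (c (k + 1)) (c' (k + 1)) ≤ θ * dist (c k) (c' k) :=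
          hexp _ _ (hnear _ hk) _ (hc k hk) _ (hc' k hk)
      _ ≤ θ * (θ ^ k * dist (c 0) (c' 0)) := by gcongr; exact ih (by omega)
      _ = θ ^ (k + 1) * dist (c 0) (c' 0) := by ring

namespace HasContractingBranches

variable {θ δ K α : ℝ}

theorem pow_mul_le (h : HasContractingBranches T θ δ) {D : ℝ} (hD₀ : 0 ≤ D) (hD : D ≤ δ) (k : ℕ) :
    θ ^ k * D ≤ δ :=
  (mul_le_of_le_one_left hD₀ (pow_le_one₀ h.nonneg h.lt_one.le)).trans hD

theorem exists_shadow (h : HasContractingBranches T θ δ) {n : ℕ} {c : ℕ → X} {y : X}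
    (hc : IsBackwardOrbit T n c) (hy : dist (c 0) y ≤ δ) :
    ∃ c' : ℕ → X, c' 0 = y ∧ IsBackwardOrbit T n c' ∧
      ∀ k ≤ n, dist (c k) (c' k) ≤ θ ^ k * dist (c 0) y := by
  choose! b hbT hbd using h.lift
  let c' : ℕ → X := fun k => Nat.rec y (fun k z => b (c (k + 1)) (c k) z) k
  have hsmall := h.pow_mul_le dist_nonneg hy
  have hd : ∀ k ≤ n, dist (c k) (c' k) ≤ θ ^ k * dist (c 0) y := by
    intro k
    induction k with
    | zero => simp [c']
    | succ k ih =>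
      intro hk
      calc dist (c (k + 1)) (c' (k + 1)) ≤ θ * dist (c k) (c' k) :=
            hbd _ _ _ (hc k hk) ((ih (by omega)).trans (hsmall k))
        _ ≤ θ * (θ ^ k * dist (c 0) y) := by gcongr; exacts [h.nonneg, ih (by omega)]
        _ = θ ^ (k + 1) * dist (c 0) y := by ring
  refine ⟨c', rfl, fun k hk => hbT _ _ _ (hc k hk) ?_, hd⟩
  exact (hd k hk.le).trans (hsmall k)


theorem exists_periodic_shadow [CompleteSpace X] (h : HasContractingBranches T θ δ) {L : ℕ}
    {σ : ℕ → X} (hL : 0 < L) (hσ : IsBackwardOrbit T L σ)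
    (hgap : dist (σ 0) (σ L) ≤ (1 - θ) * δ) :
    ∃ π : ℕ → X, IsBackwardOrbit T L π ∧ π L = π 0 ∧
      ∀ k ≤ L, dist (σ k) (π k) ≤ θ ^ k * δ := by
  have hθL : θ ^ L ≤ θ := pow_le_of_le_one h.nonneg h.lt_one.le hL.ne'
  have hball : ∀ w ∈ closedBall (σ 0) δ, dist (σ 0) w ≤ δ := fun w hw => mem_closedBall'.1 hw
  choose! c hc0 hc hcd using fun w hw => h.exists_shadow hσ (hball w hw)
  have hsmall : ∀ w ∈ closedBall (σ 0) δ, ∀ k, θ ^ k * dist (σ 0) w ≤ δ := fun w hw =>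
    h.pow_mul_le dist_nonneg (hball w hw)
  -- `w ↦ c w L` follows the inverse branches along `σ` back from `w`; a fixed point closes up `σ`
  have hmaps : Set.MapsTo (fun w => c w L) (closedBall (σ 0) δ) (closedBall (σ 0) δ) := by
    intro w hw
    rw [mem_closedBall']
    calc dist (σ 0) (c w L) ≤ dist (σ 0) (σ L) + dist (σ L) (c w L) := dist_triangle _ _ _
      _ ≤ (1 - θ) * δ + θ * δ := by
        gcongr
        exact (hcd w hw L le_rfl).trans (mul_le_mul hθL (hball w hw) dist_nonneg h.nonneg)
      _ = δ := by ring
  have hlip : ∀ w ∈ closedBall (σ 0) δ, ∀ w' ∈ closedBall (σ 0) δ,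
      dist (c w L) (c w' L) ≤ θ ^ L * dist w w' := by
    intro w hw w' hw'
    have hnear : ∀ k ≤ L, dist (c w k) (c w' k) ≤ 2 * δ := fun k hk =>
      calc dist (c w k) (c w' k) ≤ dist (σ k) (c w k) + dist (σ k) (c w' k) :=
            dist_triangle_left _ _ _
        _ ≤ δ + δ := add_le_add ((hcd w hw k hk).trans (hsmall w hw k))
            ((hcd w' hw' k hk).trans (hsmall w' hw' k))
        _ = 2 * δ := by ring
    simpa [hc0 w hw, hc0 w' hw'] using
      dist_le_pow_mul_of_isBackwardOrbit h.expand h.nonneg (hc w hw) (hc w' hw') hnear L le_rfl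
  have hcontr : ContractingWith (θ ^ L).toNNReal (hmaps.restrict _ _ _) := by
    refine ⟨by simpa using pow_lt_one₀ h.nonneg h.lt_one hL.ne', ?_⟩
    refine LipschitzWith.of_dist_le_mul fun w w' => ?_
    rw [Real.coe_toNNReal _ (pow_nonneg h.nonneg L)]
    exact hlip w w.2 w' w'.2
  obtain ⟨p, hp, hfix, -⟩ := hcontr.exists_fixedPoint' isClosed_closedBall.isComplete hmaps
    (mem_closedBall_self h.pos.le) (edist_ne_top _ _)
  refine ⟨c p, hc p hp, by rw [hfix.eq, hc0 p hp], fun k hk => ?_⟩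
  exact (hcd p hp k hk).trans (mul_le_mul_of_nonneg_left (hball p hp) (pow_nonneg h.nonneg k))


theorem exists_forall_sum_le {g : X → ℝ} [CompactSpace X] (h : HasContractingBranches T θ δ)
    (hg : ∀ x y, |g x - g y| ≤ K * dist x y ^ α) (hK : 0 ≤ K) (hα : 0 < α)
    (hg_bdd : BddAbove (Set.range g))
    (hper : ∀ L π, 0 < L → IsBackwardOrbit T L π → π L = π 0 → ∑ k ∈ range L, g (π k) ≤ 0) :
    ∃ B, ∀ n c, IsBackwardOrbit T n c → ∑ k ∈ range n, g (c (k + 1)) ≤ B := by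
  classical
  obtain ⟨G, hG⟩ := hg_bdd
  set ε := (1 - θ) * δ
  have hε : 0 < ε := mul_pos (sub_pos.2 h.lt_one) h.pos
  obtain ⟨t, -, ht, hcover⟩ := finite_cover_balls_of_compact (isCompact_univ (X := X)) (half_pos hε)
  have hcenter : ∀ x : X, ∃ z ∈ t, x ∈ ball z (ε / 2) := fun x => by
    simpa using hcover (Set.mem_univ x)
  choose center hcenter_mem hcenter_dist using hcenter
  set s := K / (1 - θ ^ α) * δ ^ α
  have hs : 0 ≤ s := mul_nonneg
    (div_nonneg hK (sub_nonneg.2 (Real.rpow_le_one h.nonneg h.lt_one.le hα.le)))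
    (Real.rpow_nonneg h.pos.le α)
  refine ⟨#ht.toFinset * (max G 0 + s), fun n c hc => ?_⟩
  -- Between two visits of the orbit to the same small ball it can be closed into a periodic
  -- orbit, whose sum is nonpositive; pigeonholing over the balls bounds the whole sum.
  refine sum_range_le_card_mul_of_returns (u := fun r => center (c (r + 1)))
    (by positivity) (fun r => (hG ⟨_, rfl⟩).trans (le_max_left _ _)) _ n
    (fun r _ => ht.mem_toFinset.2 (hcenter_mem _)) fun i L hiL hret => ?_
  rcases Nat.eq_zero_or_pos L with rfl | hL
  · simpa using hs
  set σ : ℕ → X := fun k => c (i + k + 1)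
  have hσ : IsBackwardOrbit T L σ := fun k hk => hc (i + k + 1) (by omega)
  have hgap : dist (σ 0) (σ L) ≤ ε := by
    have h₁ := mem_ball.1 (hcenter_dist (σ 0))
    have h₂ := mem_ball.1 (hcenter_dist (σ L))
    have hσ₀ : center (σ 0) = center (σ L) := hret
    rw [← hσ₀] at h₂
    linarith [dist_triangle_right (σ 0) (σ L) (center (σ 0))]
  obtain ⟨π, hπ, hπL, hσπ⟩ := h.exists_periodic_shadow hL hσ hgap
  calc ∑ r ∈ range L, g (σ r) ≤ ∑ r ∈ range L, g (π r) + s :=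
        sum_le_sum_add_of_dist_le_geometric hg hK hα h.nonneg h.lt_one h.pos.le
          fun k hk => hσπ k hk.le
    _ ≤ s := by linarith [hper L π hL hπ hπL]

theorem subAction_le_add {g : X → ℝ} {y y' : X} (h : HasContractingBranches T θ δ)
    (hg : ∀ x y, |g x - g y| ≤ K * dist x y ^ α) (hK : 0 ≤ K) (hα : 0 < α)
    (hbdd : BddAbove (backwardSums T g y')) (hyy' : dist y y' ≤ δ) :
    subAction T g y ≤ subAction T g y' + K / (1 - θ ^ α) * dist y y' ^ α := by
  refine csSup_le ⟨0, zero_mem_backwardSums y⟩ ?_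
  rintro _ ⟨n, c, rfl, hc, rfl⟩
  obtain ⟨c', rfl, hc', hcc'⟩ := h.exists_shadow hc hyy'
  have hsum := sum_le_sum_add_of_dist_le_geometric (a := fun k => c (k + 1))
    (b := fun k => c' (k + 1)) hg hK hα h.nonneg h.lt_one dist_nonneg fun k hk =>
      (hcc' (k + 1) hk).trans (mul_le_mul_of_nonneg_right
        (pow_le_pow_of_le_one h.nonneg h.lt_one.le k.le_succ) dist_nonneg)
  linarith [le_subAction hbdd ⟨n, c', rfl, hc', rfl⟩]

end HasContractingBranches

end Expanding

theorem stmt18_general {X : Type*} [MetricSpace X] [CompactSpace X]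
    [MeasurableSpace X] [BorelSpace X] (T : X → Set X)
    (hT : IsClosed {p : X × X | p.2 ∈ T p.1})
    (hopen : ∀ A : Set X, IsOpen A → IsOpen {y : X | ∃ x ∈ A, y ∈ T x})
    (hexp : ∃ lam > (1 : ℝ), ∃ η > (0 : ℝ), ∀ x y : X, dist x y ≤ η →
      ∀ x' ∈ T x, ∀ y' ∈ T y, lam * dist x y ≤ dist x' y')
    (α : ℝ) (hα : 0 < α) (f : X → ℝ)
    (hf : ∃ K > (0 : ℝ), ∀ x y : X, |f x - f y| ≤ K * dist x y ^ α) :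
    ∃ v : X → ℝ, (∃ K > (0 : ℝ), ∀ x y : X, |v x - v y| ≤ K * dist x y ^ α) ∧
      ((∃ μ : Measure X, IsProbabilityMeasure μ ∧
          ∀ A : Set X, MeasurableSet A → μ A ≤ μ {z : X | ∃ a ∈ A, a ∈ T z}) →
        ∀ x y : X, y ∈ T x →
          f x + v x - v y ≤ sSup {r : ℝ | ∃ μ : Measure X, IsProbabilityMeasure μ ∧
            (∀ A : Set X, MeasurableSet A → μ A ≤ μ {z : X | ∃ a ∈ A, a ∈ T z}) ∧
            (∫ z, f z ∂μ) = r}) := by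
  obtain ⟨θ, δ, hTθ⟩ := exists_hasContractingBranches hT hopen hexp
  obtain ⟨K, hK, hfK⟩ := hf
  obtain ⟨M, hM⟩ := isCompact_univ.exists_bound_of_continuousOn
    (continuous_of_abs_sub_le_mul_rpow hα hfK).continuousOn
  set β := sSup (invariantIntegrals T f)
  set g : X → ℝ := fun x => f x - β
  have hg : ∀ x y, |g x - g y| ≤ K * dist x y ^ α := by simpa [g] using hfK
  have hg_bdd : BddAbove (Set.range g) :=
    ⟨M - β, by rintro _ ⟨x, rfl⟩; linarith [(abs_le.1 (hM x trivial)).2]⟩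
  have hper : ∀ L π, 0 < L → IsBackwardOrbit T L π → π L = π 0 → ∑ k ∈ range L, g (π k) ≤ 0 :=
    fun L π => sum_sub_le_zero_of_periodic fun μ hμ hinv =>
      le_csSup (bddAbove_invariantIntegrals T fun x => hM x trivial) ⟨μ, hμ, hinv, rfl⟩
  obtain ⟨B, hB⟩ := hTθ.exists_forall_sum_le hg hK.le hα hg_bdd hper
  have hbdd := bddAbove_backwardSums hB
  refine ⟨subAction T g, isHolder_of_local_of_bounded hα.le hTθ.pos ?_ (abs_subAction_sub_le hB)
    fun x y hxy => hTθ.subAction_le_add hg hK.le hα (hbdd y) hxy, fun _ x y hxy => ?_⟩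
  · exact div_nonneg hK.le (sub_nonneg.2 (Real.rpow_le_one hTθ.nonneg hTθ.lt_one.le hα.le))
  · change _ ≤ β
    linarith [add_subAction_le (hbdd y) hxy]

theorem stmt18 {X : Type*} [MetricSpace X] [CompactSpace X]
    [MeasurableSpace X] [BorelSpace X] (T : X → Set X)
    (hT : IsClosed {p : X × X | p.2 ∈ T p.1})
    (hopen : ∀ A : Set X, IsOpen A → IsOpen {y : X | ∃ x ∈ A, y ∈ T x})
    (hexp : ∃ lam > (1 : ℝ), ∃ η > (0 : ℝ), ∀ x y : X, dist x y ≤ η →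
      ∀ x' ∈ T x, ∀ y' ∈ T y, lam * dist x y ≤ dist x' y')
    (α : ℝ) (hα : 0 < α) (hα1 : α ≤ 1) (f : X → ℝ)
    (hf : ∃ K > (0 : ℝ), ∀ x y : X, |f x - f y| ≤ K * dist x y ^ α) :
    ∃ v : X → ℝ, (∃ K > (0 : ℝ), ∀ x y : X, |v x - v y| ≤ K * dist x y ^ α) ∧
      ((∃ μ : Measure X, IsProbabilityMeasure μ ∧
          ∀ A : Set X, MeasurableSet A → μ A ≤ μ {z : X | ∃ a ∈ A, a ∈ T z}) →
        ∀ x y : X, y ∈ T x →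
          f x + v x - v y ≤ sSup {r : ℝ | ∃ μ : Measure X, IsProbabilityMeasure μ ∧
            (∀ A : Set X, MeasurableSet A → μ A ≤ μ {z : X | ∃ a ∈ A, a ∈ T z}) ∧
            (∫ z, f z ∂μ) = r}) :=
  stmt18_general T hT hopen hexp α hα f hf
end
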